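/- In the discrete-time standard Dynkin game with X ≤ Z ≤ Y, the backward-induction process V satisfies, for each t, V_t = ess inf over stopping times σ ∈ T_[t,T] of ess sup over stopping times τ ∈ T_[t,T] of E[R(τ,σ)|F_t] = ess sup over τ of ess inf over σ of E[R(τ,σ)|F_t]; i.e., the game has a value equal to V_t. -/

import Mathlib

open MeasureTheory Filter Set

/-- Payoff of the Dynkin game. -/
noncomputable def payoffD {Ω : Type*} (X Y Z : ℕ → Ω → ℝ) (τ σ : Ω → ℕ) (ω : Ω) : ℝ :=
  if τ ω < σ ω then X (τ ω) ω else if σ ω < τ ω then Y (σ ω) ω else Z (σ ω) ω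

/-- `g` is the essential supremum of the family `f` (in the a.e. order). -/
def IsEssSupFam {Ω : Type*} [MeasurableSpace Ω] (μ : Measure Ω) {ι : Sort*}
    (f : ι → Ω → ℝ) (g : Ω → ℝ) : Prop :=
  (∀ i, f i ≤ᵐ[μ] g) ∧ ∀ h : Ω → ℝ, (∀ i, f i ≤ᵐ[μ] h) → g ≤ᵐ[μ] h

/-- `g` is the essential infimum of the family `f` (in the a.e. order). -/
def IsEssInfFam {Ω : Type*} [MeasurableSpace Ω] (μ : Measure Ω) {ι : Sort*}
    (f : ι → Ω → ℝ) (g : Ω → ℝ) : Prop :=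
  (∀ i, g ≤ᵐ[μ] f i) ∧ ∀ h : Ω → ℝ, (∀ i, h ≤ᵐ[μ] f i) → h ≤ᵐ[μ] g

/-! Let `τ*` be the first time in `[t, T]` at which `V` meets `X`. Before `τ*` the recursion
gives `V_s ≤ E[V_{s+1} | ℱ_s]`, so `V` stopped at `τ* ∧ σ` is a submartingale on `[t, T]`; since
`V ≤ Y` before `T` and `V_{τ*} = X_{τ*} ≤ Z_{τ*}`, this yields `V_t ≤ E[R(τ*, σ) | ℱ_t]` for every
`σ`. The same argument for `(-Y, -X, -Z, -V)` gives a `σ*` with `E[R(τ, σ*) | ℱ_t] ≤ V_t` for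
every `τ`. A saddle point forces both the inf-sup and the sup-inf to equal `V_t`. -/

section Saddle

variable {Ω : Type*} [MeasurableSpace Ω] {μ : Measure Ω} {ι κ : Sort*}
  {f : ι → κ → Ω → ℝ} {v m : Ω → ℝ}

theorem IsEssInfFam.ae_eq_of_saddle {S : κ → Ω → ℝ}
    (hS : ∀ j, IsEssSupFam μ (fun i => f i j) (S j)) (hm : IsEssInfFam μ S m)
    (i₀ : ι) (hi₀ : ∀ j, v ≤ᵐ[μ] f i₀ j) (j₀ : κ) (hj₀ : ∀ i, f i j₀ ≤ᵐ[μ] v) :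
    m =ᵐ[μ] v :=
  ((hm.1 j₀).trans ((hS j₀).2 v hj₀)).antisymm
    (hm.2 v fun j => (hi₀ j).trans ((hS j).1 i₀))

theorem IsEssSupFam.ae_eq_of_saddle {I : ι → Ω → ℝ}
    (hI : ∀ i, IsEssInfFam μ (f i) (I i)) (hm : IsEssSupFam μ I m)
    (i₀ : ι) (hi₀ : ∀ j, v ≤ᵐ[μ] f i₀ j) (j₀ : κ) (hj₀ : ∀ i, f i j₀ ≤ᵐ[μ] v) :
    m =ᵐ[μ] v :=
  (hm.2 v fun i => ((hI i).1 j₀).trans (hj₀ i)).antisymm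
    (((hI i₀).2 v hi₀).trans (hm.1 i₀))

end Saddle

section OptionalSampling

variable {Ω : Type*} {m0 : MeasurableSpace Ω} {μ : Measure Ω} [IsFiniteMeasure μ]
  {ℱ : Filtration ℕ m0} {V : ℕ → Ω → ℝ} {ρ : Ω → WithTop ℕ}

theorem stoppedProcess_le_condExp_succ (hVa : Adapted ℱ V) (hVi : ∀ s, Integrable (V s) μ)
    (hρ : IsStoppingTime ℱ ρ) {s : ℕ}
    (hsub : ∀ᵐ ω ∂μ, (s : WithTop ℕ) < ρ ω → V s ω ≤ μ[V (s + 1) | ℱ s] ω) :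
    stoppedProcess V ρ s ≤ᵐ[μ] μ[stoppedProcess V ρ (s + 1) | ℱ s] := by
  set B := {ω | (s : WithTop ℕ) < ρ ω}
  have hB : MeasurableSet[ℱ s] B := hρ.measurableSet_gt s
  have hW : StronglyMeasurable[ℱ s] (stoppedProcess V ρ s) :=
    hVa.stronglyAdapted.stoppedProcess_of_discrete hρ s
  have hincr : stoppedProcess V ρ (s + 1) =
      stoppedProcess V ρ s + B.indicator (V (s + 1) - V s) := by
    ext ω
    by_cases hω : ω ∈ B
    · rw [Pi.add_apply, stoppedProcess_eq_of_le (i := s + 1) (ENat.natCast_add_one_le_iff.2 hω),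
        stoppedProcess_eq_of_le (i := s) hω.le,
        indicator_of_mem hω, Pi.sub_apply, add_sub_cancel]
    · have hω' : ρ ω ≤ s := not_lt.1 hω
      rw [Pi.add_apply, stoppedProcess_eq_of_ge (i := s) hω',
        stoppedProcess_eq_of_ge (i := s + 1) (hω'.trans (WithTop.coe_le_coe.2 s.le_succ)),
        indicator_of_notMem hω, add_zero]
  have hcond : μ[stoppedProcess V ρ (s + 1) | ℱ s] =ᵐ[μ]
      stoppedProcess V ρ s + B.indicator (μ[V (s + 1) | ℱ s] - V s) := by
    rw [hincr]
    refine (condExp_add (integrable_stoppedProcess hρ hVi s)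
      (((hVi (s + 1)).sub (hVi s)).indicator (ℱ.le s B hB)) _).trans ?_
    rw [condExp_of_stronglyMeasurable (ℱ.le s) hW (integrable_stoppedProcess hρ hVi s)]
    refine EventuallyEq.rfl.add ((condExp_indicator ((hVi (s + 1)).sub (hVi s)) hB).trans ?_)
    filter_upwards [condExp_sub (hVi (s + 1)) (hVi s) (ℱ s)] with ω hω
    by_cases hωB : ω ∈ B
    · rw [indicator_of_mem hωB, indicator_of_mem hωB, hω,
        condExp_of_stronglyMeasurable (ℱ.le s) (hVa s).stronglyMeasurable (hVi s)]
    · rw [indicator_of_notMem hωB, indicator_of_notMem hωB]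
  filter_upwards [hcond, hsub] with ω hω hsubω
  rw [hω, Pi.add_apply]
  by_cases hωB : ω ∈ B
  · simpa [hωB] using hsubω hωB
  · simp [hωB]

theorem stoppedProcess_le_condExp_stoppedProcess (hVa : Adapted ℱ V)
    (hVi : ∀ s, Integrable (V s) μ) (hρ : IsStoppingTime ℱ ρ) {t n : ℕ} (htn : t ≤ n)
    (hsub : ∀ s, t ≤ s → s < n →
      ∀ᵐ ω ∂μ, (s : WithTop ℕ) < ρ ω → V s ω ≤ μ[V (s + 1) | ℱ s] ω) :
    stoppedProcess V ρ t ≤ᵐ[μ] μ[stoppedProcess V ρ n | ℱ t] := by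
  induction n, htn using Nat.le_induction with
  | base =>
    rw [condExp_of_stronglyMeasurable (ℱ.le t)
      (hVa.stronglyAdapted.stoppedProcess_of_discrete hρ t)
      (integrable_stoppedProcess hρ hVi t)]
  | succ n htn ih =>
    calc stoppedProcess V ρ t
        ≤ᵐ[μ] μ[stoppedProcess V ρ n | ℱ t] := ih fun s hts hsn => hsub s hts (by omega)
      _ ≤ᵐ[μ] μ[μ[stoppedProcess V ρ (n + 1) | ℱ n] | ℱ t] :=
        condExp_mono (integrable_stoppedProcess hρ hVi n) integrable_condExp
          (stoppedProcess_le_condExp_succ hVa hVi hρ (hsub n htn n.lt_succ_self))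
      _ =ᵐ[μ] μ[stoppedProcess V ρ (n + 1) | ℱ t] := condExp_condExp_of_le (ℱ.mono htn) (ℱ.le n)

theorem le_condExp_stoppedValue_of_le_condExp_before_stop (hVa : Adapted ℱ V)
    (hVi : ∀ s, Integrable (V s) μ) (hρ : IsStoppingTime ℱ ρ) {t n : ℕ} (htn : t ≤ n)
    (htρ : ∀ ω, t ≤ ρ ω) (hρn : ∀ ω, ρ ω ≤ n)
    (hsub : ∀ s, t ≤ s → s < n →
      ∀ᵐ ω ∂μ, (s : WithTop ℕ) < ρ ω → V s ω ≤ μ[V (s + 1) | ℱ s] ω) :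
    V t ≤ᵐ[μ] μ[stoppedValue V ρ | ℱ t] := by
  have hstart : stoppedProcess V ρ t = V t := funext fun ω => stoppedProcess_eq_of_le (htρ ω)
  have hend : stoppedProcess V ρ n = stoppedValue V ρ :=
    funext fun ω => stoppedProcess_eq_of_ge (hρn ω)
  simpa only [hstart, hend] using stoppedProcess_le_condExp_stoppedProcess hVa hVi hρ htn hsub

end OptionalSampling

theorem min_max_le_of_ne_left {α : Type*} [LinearOrder α] {a b c : α} (hab : a ≤ b)
    (h : min b (max a c) ≠ a) : min b (max a c) ≤ c := by
  rcases le_total c a with hca | hac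
  · simp [max_eq_left hca, min_eq_right hab] at h
  · exact (min_le_right _ _).trans (max_eq_right hac).le

theorem le_min_max_of_ne_right {α : Type*} [LinearOrder α] {a b c : α}
    (h : min b (max a c) ≠ b) : c ≤ min b (max a c) :=
  (le_max_right a c).trans (min_choice b _ |>.resolve_left h).ge

section BackwardInduction

variable {Ω : Type*} {m0 : MeasurableSpace Ω} {μ : Measure Ω} {ℱ : Filtration ℕ m0}
  {X Y Z V : ℕ → Ω → ℝ} {T : ℕ}

theorem measurable_integrable_of_backward_recursion (hXa : Adapted ℱ X) (hYa : Adapted ℱ Y)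
    (hZa : Adapted ℱ Z) (hXi : ∀ s, Integrable (X s) μ) (hYi : ∀ s, Integrable (Y s) μ)
    (hZi : ∀ s, Integrable (Z s) μ) (hVT : ∀ ω, V T ω = Z T ω)
    (hV : ∀ s < T, ∀ ω, V s ω = min (Y s ω) (max (X s ω) (μ[V (s + 1) | ℱ s] ω))) :
    ∀ s ≤ T, Measurable[ℱ s] (V s) ∧ Integrable (V s) μ := by
  intro s hs
  rcases hs.lt_or_eq with hs | rfl
  · rw [funext (hV s hs)]
    exact ⟨(hYa s).min ((hXa s).max stronglyMeasurable_condExp.measurable),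
      (hYi s).inf ((hXi s).sup integrable_condExp)⟩
  · rw [funext hVT]
    exact ⟨hZa s, hZi s⟩

end BackwardInduction

section DynkinGame

variable {Ω : Type*} {m0 : MeasurableSpace Ω} {μ : Measure Ω} {ℱ : Filtration ℕ m0}
  {X Y Z V : ℕ → Ω → ℝ} {t T : ℕ}

def IsStoppingTimeIcc (ℱ : Filtration ℕ m0) (t T : ℕ) (τ : Ω → ℕ) : Prop :=
  IsStoppingTime ℱ (fun ω => (τ ω : WithTop ℕ)) ∧ ∀ ω, τ ω ∈ Icc t T

theorem payoffD_neg (X Y Z : ℕ → Ω → ℝ) (τ σ : Ω → ℕ) :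
    payoffD (-Y) (-X) (-Z) σ τ = -payoffD X Y Z τ σ := by
  ext ω
  rcases lt_trichotomy (τ ω) (σ ω) with h | h | h
  · simp [payoffD, h, h.not_gt]
  · simp [payoffD, h]
  · simp [payoffD, h, h.not_gt]

theorem integrable_payoffD (hXi : ∀ s, Integrable (X s) μ) (hYi : ∀ s, Integrable (Y s) μ)
    (hZi : ∀ s, Integrable (Z s) μ) {τ σ : Ω → ℕ} (hτ : IsStoppingTimeIcc ℱ t T τ)
    (hσ : IsStoppingTimeIcc ℱ t T σ) :
    Integrable (payoffD X Y Z τ σ) μ := by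
  have hlt : ∀ {τ σ : Ω → ℕ}, IsStoppingTimeIcc ℱ t T τ → IsStoppingTimeIcc ℱ t T σ →
      MeasurableSet {ω | τ ω < σ ω} := fun hτ hσ => by
    simpa using measurableSet_lt hτ.1.measurable' hσ.1.measurable'
  have hstopped : ∀ {τ : Ω → ℕ} {U : ℕ → Ω → ℝ}, IsStoppingTimeIcc ℱ t T τ →
      (∀ s, Integrable (U s) μ) → Integrable (fun ω => U (τ ω) ω) μ := fun hτ hU =>
    integrable_stoppedValue ℕ hτ.1 hU (N := T) fun ω => by simpa using (hτ.2 ω).2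
  have hpiece : payoffD X Y Z τ σ = {ω | τ ω < σ ω}.piecewise (fun ω => X (τ ω) ω)
      ({ω | σ ω < τ ω}.piecewise (fun ω => Y (σ ω) ω) (fun ω => Z (σ ω) ω)) := rfl
  rw [hpiece]
  exact Integrable.piecewise (hlt hτ hσ) (hstopped hτ hXi).integrableOn
    (Integrable.piecewise (hlt hσ hτ) (hstopped hσ hYi).integrableOn
      (hstopped hσ hZi).integrableOn).integrableOn

theorem exists_isStoppingTimeIcc_le_condExp_payoffD [IsFiniteMeasure μ] (htT : t ≤ T)
    (hXa : Adapted ℱ X) (hVa : Adapted ℱ V) (hXi : ∀ s, Integrable (X s) μ)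
    (hYi : ∀ s, Integrable (Y s) μ) (hZi : ∀ s, Integrable (Z s) μ)
    (hVi : ∀ s, Integrable (V s) μ) (hXZ : ∀ s ω, X s ω ≤ Z s ω) (hVT : V T = X T)
    (hVY : ∀ s < T, ∀ ω, V s ω ≤ Y s ω)
    (hVsub : ∀ s < T, ∀ᵐ ω ∂μ, V s ω ≠ X s ω → V s ω ≤ μ[V (s + 1) | ℱ s] ω) :
    ∃ τ, IsStoppingTimeIcc ℱ t T τ ∧
      ∀ σ, IsStoppingTimeIcc ℱ t T σ → V t ≤ᵐ[μ] μ[payoffD X Y Z τ σ | ℱ t] := by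
  set τ := hittingBtwn (V - X) {0} t T
  have hτ : IsStoppingTimeIcc ℱ t T τ :=
    ⟨(hVa.sub hXa).isStoppingTime_hittingBtwn (measurableSet_singleton 0),
      fun ω => hittingBtwn_mem_Icc htT ω⟩
  have hVτ : ∀ ω, V (τ ω) ω = X (τ ω) ω := fun ω => sub_eq_zero.1 <|
    hittingBtwn_mem_set (u := V - X) (s := {0}) ⟨T, ⟨htT, le_rfl⟩, by simp [hVT]⟩
  have hVX_of_lt : ∀ ω s, t ≤ s → s < τ ω → V s ω ≠ X s ω := fun ω s hts hs =>
    sub_ne_zero.1 (notMem_of_lt_hittingBtwn hs hts)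
  refine ⟨τ, hτ, fun σ hσ => ?_⟩
  set ρ : Ω → WithTop ℕ := fun ω => min (τ ω : WithTop ℕ) (σ ω)
  have hρ : ∀ ω, stoppedValue V ρ ω = V (min (τ ω) (σ ω)) ω := fun _ => rfl
  have hVρ : V t ≤ᵐ[μ] μ[stoppedValue V ρ | ℱ t] := by
    refine le_condExp_stoppedValue_of_le_condExp_before_stop hVa hVi (hτ.1.min hσ.1) htT
      (fun ω => by simpa [ρ] using ⟨(hτ.2 ω).1, (hσ.2 ω).1⟩)
      (fun ω => by simpa [ρ] using Or.inl (hτ.2 ω).2) fun s hts hsT => ?_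
    filter_upwards [hVsub s hsT] with ω hω hsρ
    exact hω (hVX_of_lt ω s hts (by simp_all [ρ]))
  have hρ_le : stoppedValue V ρ ≤ payoffD X Y Z τ σ := fun ω => by
    rw [hρ]
    rcases lt_trichotomy (τ ω) (σ ω) with h | h | h
    · simp [payoffD, h, h.le, hVτ]
    · have hVσ := hVτ ω
      rw [h] at hVσ
      simpa [payoffD, h, hVσ] using hXZ (σ ω) ω
    · simpa [payoffD, h, h.le, h.not_gt] using hVY (σ ω) (h.trans_le (hτ.2 ω).2) ω
  exact hVρ.trans (condExp_mono (integrable_stoppedValue ℕ (hτ.1.min hσ.1) hVi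
    (N := T) fun ω => by simpa [ρ] using Or.inl (hτ.2 ω).2)
    (integrable_payoffD hXi hYi hZi hτ hσ) (.of_forall hρ_le))

theorem exists_isStoppingTimeIcc_condExp_payoffD_le [IsFiniteMeasure μ] (htT : t ≤ T)
    (hYa : Adapted ℱ Y) (hVa : Adapted ℱ V) (hXi : ∀ s, Integrable (X s) μ)
    (hYi : ∀ s, Integrable (Y s) μ) (hZi : ∀ s, Integrable (Z s) μ)
    (hVi : ∀ s, Integrable (V s) μ) (hZY : ∀ s ω, Z s ω ≤ Y s ω) (hVT : V T = Y T)
    (hXV : ∀ s < T, ∀ ω, X s ω ≤ V s ω)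
    (hVsup : ∀ s < T, ∀ᵐ ω ∂μ, V s ω ≠ Y s ω → μ[V (s + 1) | ℱ s] ω ≤ V s ω) :
    ∃ σ, IsStoppingTimeIcc ℱ t T σ ∧
      ∀ τ, IsStoppingTimeIcc ℱ t T τ → μ[payoffD X Y Z τ σ | ℱ t] ≤ᵐ[μ] V t := by
  have hsub : ∀ s < T, ∀ᵐ ω ∂μ,
      (-V) s ω ≠ (-Y) s ω → (-V) s ω ≤ μ[(-V) (s + 1) | ℱ s] ω := fun s hs => by
    filter_upwards [hVsup s hs, condExp_neg (V (s + 1)) (ℱ s)] with ω hω hneg hne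
    simp only [Pi.neg_apply, ne_eq, neg_inj] at hneg hne ⊢
    simpa [hneg] using hω hne
  obtain ⟨σ, hσ, hσV⟩ := exists_isStoppingTimeIcc_le_condExp_payoffD (X := -Y) (Y := -X)
    (Z := -Z) htT hYa.neg hVa.neg
    (fun s => (hYi s).neg) (fun s => (hXi s).neg) (fun s => (hZi s).neg) (fun s => (hVi s).neg)
    (fun s ω => neg_le_neg (hZY s ω)) (by rw [Pi.neg_apply, Pi.neg_apply, hVT])
    (fun s hs ω => neg_le_neg (hXV s hs ω)) hsub
  refine ⟨σ, hσ, fun τ hτ => ?_⟩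
  filter_upwards [hσV τ hτ, condExp_neg (payoffD X Y Z τ σ) (ℱ t)] with ω hω hneg
  rw [payoffD_neg, hneg] at hω
  simpa using hω

end DynkinGame

/-- In the discrete-time standard Dynkin game with `X ≤ Z ≤ Y`, the backward-induction
process `V` satisfies, for each `t`,
`V_t = essinf_{σ ∈ T_[t,T]} esssup_{τ ∈ T_[t,T]} E[R(τ,σ)|ℱ t]
     = esssup_{τ ∈ T_[t,T]} essinf_{σ ∈ T_[t,T]} E[R(τ,σ)|ℱ t]`,
i.e. the game has a value equal to `V_t`. -/
theorem stmt3 {Ω : Type*} {m0 : MeasurableSpace Ω} (μ : Measure Ω) [IsProbabilityMeasure μ]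
    (ℱ : Filtration ℕ m0) (T : ℕ)
    (X Y Z V : ℕ → Ω → ℝ)
    (hXa : Adapted ℱ X) (hYa : Adapted ℱ Y) (hZa : Adapted ℱ Z)
    (hXi : ∀ t, Integrable (X t) μ) (hYi : ∀ t, Integrable (Y t) μ)
    (hZi : ∀ t, Integrable (Z t) μ)
    (hXZ : ∀ t ω, X t ω ≤ Z t ω) (hZY : ∀ t ω, Z t ω ≤ Y t ω)
    (htermX : ∀ ω, X T ω = Z T ω) (htermY : ∀ ω, Z T ω = Y T ω)
    (hVT : ∀ ω, V T ω = Z T ω)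
    (hV : ∀ t, t < T → ∀ ω, V t ω = min (Y t ω) (max (X t ω) ((μ[V (t + 1) | ℱ t]) ω))) :
    ∀ t, t ≤ T →
      (∀ (S : {σ : Ω → ℕ // IsStoppingTime ℱ (fun ω => (σ ω : WithTop ℕ)) ∧ ∀ ω, σ ω ∈ Set.Icc t T} → Ω → ℝ)
          (m : Ω → ℝ),
        (∀ σ, IsEssSupFam μ
          (fun τ : {τ : Ω → ℕ // IsStoppingTime ℱ (fun ω => (τ ω : WithTop ℕ)) ∧ ∀ ω, τ ω ∈ Set.Icc t T} =>
            μ[payoffD X Y Z τ.1 σ.1 | ℱ t]) (S σ)) →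
        IsEssInfFam μ S m → m =ᵐ[μ] V t) ∧
      (∀ (I : {τ : Ω → ℕ // IsStoppingTime ℱ (fun ω => (τ ω : WithTop ℕ)) ∧ ∀ ω, τ ω ∈ Set.Icc t T} → Ω → ℝ)
          (m : Ω → ℝ),
        (∀ τ, IsEssInfFam μ
          (fun σ : {σ : Ω → ℕ // IsStoppingTime ℱ (fun ω => (σ ω : WithTop ℕ)) ∧ ∀ ω, σ ω ∈ Set.Icc t T} =>
            μ[payoffD X Y Z τ.1 σ.1 | ℱ t]) (I τ)) →
        IsEssSupFam μ I m → m =ᵐ[μ] V t) := by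
  intro t htT
  have hXY : ∀ s ω, X s ω ≤ Y s ω := fun s ω => (hXZ s ω).trans (hZY s ω)
  have hVmi := measurable_integrable_of_backward_recursion hXa hYa hZa hXi hYi hZi hVT hV
  -- `V` is only constrained up to `T`; frozen at `T` it becomes an adapted process on all of `ℕ`.
  set W : ℕ → Ω → ℝ := fun s => V (min s T)
  have hW : ∀ s ≤ T, W s = V s := fun s hs => by simp only [W, min_eq_left hs]
  have hWa : Adapted ℱ W := fun s =>
    (hVmi _ (min_le_right s T)).1.mono (ℱ.mono (min_le_left s T)) le_rfl
  have hWi : ∀ s, Integrable (W s) μ := fun s => (hVmi _ (min_le_right s T)).2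
  have hWrec : ∀ s < T, ∀ ω, W s ω = min (Y s ω) (max (X s ω) (μ[W (s + 1) | ℱ s] ω)) :=
    fun s hs => by rw [hW s hs.le, hW (s + 1) hs]; exact hV s hs
  obtain ⟨τ, hτ, hτV⟩ := exists_isStoppingTimeIcc_le_condExp_payoffD htT hXa hWa hXi hYi hZi hWi
    hXZ (by rw [hW T le_rfl]; exact funext fun ω => (hVT ω).trans (htermX ω).symm)
    (fun s hs ω => (hWrec s hs ω).trans_le (min_le_left _ _))
    (fun s hs => .of_forall fun ω hne => by
      rw [hWrec s hs ω] at hne ⊢; exact min_max_le_of_ne_left (hXY s ω) hne)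
  obtain ⟨σ, hσ, hσV⟩ := exists_isStoppingTimeIcc_condExp_payoffD_le htT hYa hWa hXi hYi hZi hWi
    hZY (by rw [hW T le_rfl]; exact funext fun ω => (hVT ω).trans (htermY ω))
    (fun s hs ω => (le_min (hXY s ω) (le_max_left _ _)).trans_eq (hWrec s hs ω).symm)
    (fun s hs => .of_forall fun ω hne => by
      rw [hWrec s hs ω] at hne ⊢; exact le_min_max_of_ne_right hne)
  rw [hW t htT] at hτV hσV
  exact ⟨fun S m hS hm => IsEssInfFam.ae_eq_of_saddle hS hm ⟨τ, hτ⟩ (fun σ => hτV σ.1 σ.2)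
      ⟨σ, hσ⟩ (fun τ => hσV τ.1 τ.2),
    fun I m hI hm => IsEssSupFam.ae_eq_of_saddle hI hm ⟨τ, hτ⟩ (fun σ => hτV σ.1 σ.2)
      ⟨σ, hσ⟩ (fun τ => hσV τ.1 τ.2)⟩
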